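/- Let {λₙ} be non-negative integers with λ₀ = 0, λ₁ > 0, λₙ₊₁ > 3λₙ for n ≥ 1, and A = {±λₙ}. Then there exists D ∈ A + A + A that fails the P(3) property if and only if for some n ≥ 1 one of the following Diophantine equations has a solution: (1) λₙ₊₁ = 3λₙ + λₘ + λₖ with 0 ≤ λₘ ≤ λₖ ≤ λₙ and λₖ > 0, or (2) λₙ₊₁ + λₘ = 3λₙ + λₖ with 0 ≤ λₘ < λₖ ≤ λₙ. -/
import Mathlib


/-- The symmetrized spectrum `A = {±λₙ}`. -/
def lacSet (lam : ℕ → ℕ) : Set ℤ := {x : ℤ | ∃ n : ℕ, x = (lam n : ℤ) ∨ x = -(lam n : ℤ)}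

/-- `s` is a representation of `D` as a sum of three elements of `A`
(representations are identified modulo permutation, i.e. are multisets). -/
def IsRep (A : Set ℤ) (D : ℤ) (s : Multiset ℤ) : Prop :=
  Multiset.card s = 3 ∧ (∀ x ∈ s, x ∈ A) ∧ s.sum = D

/-- A three-term representation is trivial if it contains a pair `{m, -m}`
(so it has the form `D + m - m`). -/
def TrivialTriple (s : Multiset ℤ) : Prop := ∃ m : ℤ, ({m, -m} : Multiset ℤ) ≤ s

/-- `D` is a P(3) exception for `A`: it admits two genuinely different
(distinct modulo permutation, non-trivial) three-term representations. -/
def IsP3Exception (A : Set ℤ) (D : ℤ) : Prop :=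
  ∃ s t : Multiset ℤ, IsRep A D s ∧ IsRep A D t ∧
    ¬ TrivialTriple s ∧ ¬ TrivialTriple t ∧ s ≠ t

set_option linter.unusedSectionVars false

section Aux

lemma triple_swap12 (a b c : ℤ) : ({a,b,c} : Multiset ℤ) = {b,a,c} := by
  simp only [Multiset.insert_eq_cons]
  exact Multiset.cons_swap a b _

lemma triple_swap23 (a b c : ℤ) : ({a,b,c} : Multiset ℤ) = {a,c,b} := by
  simp only [Multiset.insert_eq_cons]
  exact congrArg (a ::ₘ ·) (Multiset.pair_comm b c)

lemma pair_le_triple (m w : ℤ) : ({m, -m} : Multiset ℤ) ≤ ({m, -m, w} : Multiset ℤ) := by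
  simp only [Multiset.insert_eq_cons]
  refine Multiset.cons_le_cons m ?_
  rw [← Multiset.cons_zero (-m)]
  exact Multiset.cons_le_cons (-m) (Multiset.zero_le _)

lemma trivialTriple_iff (x y z : ℤ) :
    TrivialTriple ({x, y, z} : Multiset ℤ) ↔ x + y = 0 ∨ x + z = 0 ∨ y + z = 0 := by
  constructor
  · rintro ⟨m, hm⟩
    by_cases hmm : m = -m
    · have h0 : m = 0 := by omega
      subst h0
      have hc := Multiset.le_iff_count.mp hm 0
      simp only [Multiset.insert_eq_cons, Multiset.count_cons, Multiset.count_singleton,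
        Multiset.count_zero] at hc
      split_ifs at hc <;> omega
    · have h1 : m ∈ ({x, y, z} : Multiset ℤ) :=
        Multiset.mem_of_le hm (by simp)
      have h2 : -m ∈ ({x, y, z} : Multiset ℤ) :=
        Multiset.mem_of_le hm (by simp)
      simp only [Multiset.insert_eq_cons, Multiset.mem_cons, Multiset.mem_singleton] at h1 h2
      rcases h1 with rfl | rfl | rfl <;> rcases h2 with h2 | h2 | h2 <;> omega
  · intro h
    rcases h with h | h | h
    · have hy : y = -x := by omega
      subst hy
      exact ⟨x, pair_le_triple x z⟩
    · have hz : z = -x := by omega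
      subst hz
      rw [triple_swap23]
      exact ⟨x, pair_le_triple x y⟩
    · have hz : z = -y := by omega
      subst hz
      rw [triple_swap12, triple_swap23]
      exact ⟨y, pair_le_triple y x⟩

lemma triple_sum (a b c : ℤ) : ({a,b,c} : Multiset ℤ).sum = a + b + c := by
  simp only [Multiset.insert_eq_cons, Multiset.sum_cons, Multiset.sum_singleton]
  ring

section B
variable {lam : ℕ → ℕ}

lemma lam_mem (n : ℕ) : ((lam n : ℤ)) ∈ lacSet lam := ⟨n, Or.inl rfl⟩
lemma neg_lam_mem (n : ℕ) : (-(lam n : ℤ)) ∈ lacSet lam := ⟨n, Or.inr rfl⟩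

lemma neg_mem {x : ℤ} (hx : x ∈ lacSet lam) : -x ∈ lacSet lam := by
  obtain ⟨n, h | h⟩ := hx
  · exact ⟨n, Or.inr (by omega)⟩
  · exact ⟨n, Or.inl (by omega)⟩

lemma abs_mem {x : ℤ} (hx : x ∈ lacSet lam) : ∃ j, |x| = (lam j : ℤ) := by
  obtain ⟨n, h | h⟩ := hx <;> exact ⟨n, by rw [h]; simp [abs_of_nonneg, abs_of_nonpos]⟩

lemma mem_lac_pos {x : ℤ} (hx : x ∈ lacSet lam) (h : 0 ≤ x) : ∃ j, x = (lam j : ℤ) := by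
  obtain ⟨n, hh | hh⟩ := hx
  · exact ⟨n, hh⟩
  · exact ⟨n, by omega⟩

lemma mem_lac_neg {x : ℤ} (hx : x ∈ lacSet lam) (h : x < 0) :
    ∃ j, x = -(lam j : ℤ) ∧ 0 < lam j := by
  obtain ⟨n, hh | hh⟩ := hx
  · exact absurd hh (by intro hc; have : (0:ℤ) ≤ (lam n : ℤ) := Int.natCast_nonneg _; omega)
  · exact ⟨n, hh, by have : (0:ℤ) ≤ (lam n : ℤ) := Int.natCast_nonneg _; omega⟩

variable (h0 : lam 0 = 0) (h1 : 0 < lam 1)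
  (hlac : ∀ n, 1 ≤ n → 3 * lam n < lam (n + 1))

include h0 h1 hlac

lemma lam_pos : ∀ n, 1 ≤ n → 0 < lam n := by
  intro n hn
  induction n with
  | zero => omega
  | succ k ih =>
    rcases Nat.eq_zero_or_pos k with rfl | hk
    · simpa using h1
    · have := hlac k hk
      have := ih hk
      omega

lemma lam_mono : StrictMono lam := by
  apply strictMono_nat_of_lt_succ
  intro n
  rcases Nat.eq_zero_or_pos n with rfl | hn
  · simpa [h0] using h1
  · have := hlac n hn
    have := lam_pos h0 h1 hlac n hn
    omega

lemma lam_gap {n : ℕ} (hn : 1 ≤ n) : 3 * lam (n - 1) < lam n := by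
  rcases Nat.exists_eq_add_of_le hn with ⟨k, rfl⟩
  rcases Nat.eq_zero_or_pos k with rfl | hk
  · simpa [h0] using h1
  · have := hlac k hk
    have hh : 1 + k - 1 = k := by omega
    rw [hh, Nat.add_comm 1 k]
    omega

lemma small {x : ℤ} {a : ℕ} (ha : 1 ≤ a) (hx : x ∈ lacSet lam)
    (hle : |x| ≤ (lam a : ℤ)) (hne : x ≠ (lam a : ℤ)) (hne' : x ≠ -(lam a : ℤ)) :
    |x| ≤ (lam (a - 1) : ℤ) := by
  obtain ⟨j, hj⟩ := abs_mem hx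
  have hmono := lam_mono h0 h1 hlac
  have hja : lam j ≠ lam a := by
    intro hc
    have : |x| = (lam a : ℤ) := by rw [hj]; exact_mod_cast hc
    rcases abs_eq (by positivity : (0:ℤ) ≤ (lam a:ℤ)) |>.mp this with h | h <;> tauto
  have hlt : lam j < lam a := by
    have : (lam j : ℤ) ≤ (lam a : ℤ) := hj ▸ hle
    have := Int.ofNat_le.mp this
    omega
  have : j < a := hmono.lt_iff_lt.mp hlt
  have : lam j ≤ lam (a - 1) := hmono.monotone (by omega)
  rw [hj]
  exact_mod_cast this

lemma R1aux {D t p q : ℤ} (hD : 0 < D)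
    (ht : t ∈ lacSet lam) (hp : p ∈ lacSet lam) (hq : q ∈ lacSet lam)
    (hpt : |p| ≤ |t|) (hqt : |q| ≤ |t|) (hsum : t + p + q = D)
    (htp : t + p ≠ 0) (htq : t + q ≠ 0) :
    ∃ a, 1 ≤ a ∧ t = (lam a : ℤ) := by
  rcases le_or_gt 0 t with htt | htt
  · obtain ⟨j, rfl⟩ := mem_lac_pos ht htt
    refine ⟨j, ?_, rfl⟩
    by_contra hj
    have hj0 : j = 0 := by omega
    subst hj0
    rw [h0] at hpt hqt hsum
    simp only [Nat.cast_zero, abs_zero] at hpt hqt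
    push_cast at hsum
    have hp0 := abs_le.mp hpt
    have hq0 := abs_le.mp hqt
    omega
  · exfalso
    obtain ⟨j, rfl, hjpos⟩ := mem_lac_neg ht htt
    have hj1 : 1 ≤ j := by
      by_contra hj
      have hj0 : j = 0 := by omega
      rw [hj0] at hjpos
      omega
    have hgap : 3 * (lam (j-1) : ℤ) < (lam j : ℤ) := by exact_mod_cast lam_gap h0 h1 hlac hj1
    have habs : |(-(lam j : ℤ))| = (lam j : ℤ) := by simp
    rw [habs] at hpt hqt
    have hL1 : (0:ℤ) ≤ (lam (j-1) : ℤ) := Int.natCast_nonneg _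
    -- case analysis on p
    by_cases hpe : p = (lam j : ℤ)
    · apply htp; omega
    by_cases hpe' : p = -(lam j : ℤ)
    · -- q analysis
      by_cases hqe : q = (lam j : ℤ)
      · apply htq; omega
      by_cases hqe' : q = -(lam j : ℤ)
      · omega
      · have hqs := small h0 h1 hlac hj1 hq hqt hqe hqe'
        have := abs_le.mp hqs
        omega
    · have hps := small h0 h1 hlac hj1 hp hpt hpe hpe'
      have hpb := abs_le.mp hps
      by_cases hqe : q = (lam j : ℤ)
      · apply htq; omega
      by_cases hqe' : q = -(lam j : ℤ)
      · omega
      · have hqs := small h0 h1 hlac hj1 hq hqt hqe hqe'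
        have hqb := abs_le.mp hqs
        omega

lemma R1 {D : ℤ} {s : Multiset ℤ} (hD : 0 < D)
    (hrep : IsRep (lacSet lam) D s) (hnt : ¬ TrivialTriple s) :
    ∃ (a : ℕ) (x y : ℤ), 1 ≤ a ∧ s = {((lam a : ℤ)), x, y} ∧
      x ∈ lacSet lam ∧ y ∈ lacSet lam ∧ |x| ≤ (lam a : ℤ) ∧ |y| ≤ (lam a : ℤ) ∧
      (lam a : ℤ) + x + y = D ∧
      (lam a : ℤ) + x ≠ 0 ∧ (lam a : ℤ) + y ≠ 0 ∧ x + y ≠ 0 := by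
  obtain ⟨hcard, hmem, hsum⟩ := hrep
  obtain ⟨x, y, z, rfl⟩ := Multiset.card_eq_three.mp hcard
  rw [triple_sum] at hsum
  have hx : x ∈ lacSet lam := hmem x (by simp)
  have hy : y ∈ lacSet lam := hmem y (by simp)
  have hz : z ∈ lacSet lam := hmem z (by simp)
  rw [trivialTriple_iff] at hnt
  push_neg at hnt
  obtain ⟨hxy, hxz, hyz⟩ := hnt
  have core : ∀ t p q : ℤ, t ∈ lacSet lam → p ∈ lacSet lam → q ∈ lacSet lam →
      |p| ≤ |t| → |q| ≤ |t| → t + p + q = D → t + p ≠ 0 → t + q ≠ 0 → p + q ≠ 0 →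
      ∃ (a : ℕ) (x' y' : ℤ), 1 ≤ a ∧ ({t, p, q} : Multiset ℤ) = {((lam a : ℤ)), x', y'} ∧
        x' ∈ lacSet lam ∧ y' ∈ lacSet lam ∧ |x'| ≤ (lam a : ℤ) ∧ |y'| ≤ (lam a : ℤ) ∧
        (lam a : ℤ) + x' + y' = D ∧
        (lam a : ℤ) + x' ≠ 0 ∧ (lam a : ℤ) + y' ≠ 0 ∧ x' + y' ≠ 0 := by
    intro t p q ht hp hq hpt hqt hs htp htq hpq
    obtain ⟨a, ha, rfl⟩ := R1aux h0 h1 hlac hD ht hp hq hpt hqt hs htp htq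
    have habs : |(lam a : ℤ)| = (lam a : ℤ) := abs_of_nonneg (Int.natCast_nonneg _)
    rw [habs] at hpt hqt
    exact ⟨a, p, q, ha, rfl, hp, hq, hpt, hqt, hs, htp, htq, hpq⟩
  rcases le_total |x| |y| with h | h
  · rcases le_total |y| |z| with h' | h'
    · -- z top
      obtain ⟨a, x', y', res⟩ := core z x y hz hx hy (le_trans h h') h'
        (by omega) (by omega) (by omega) (by omega)
      exact ⟨a, x', y', by rwa [triple_swap23, triple_swap12] ⟩
    · -- y top
      obtain ⟨a, x', y', res⟩ := core y x z hy hx hz h h'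
        (by omega) (by omega) (by omega) (by omega)
      exact ⟨a, x', y', by rwa [triple_swap12]⟩
  · rcases le_total |x| |z| with h' | h'
    · -- z top
      obtain ⟨a, x', y', res⟩ := core z y x hz hy hx (le_trans h h') h'
        (by omega) (by omega) (by omega) (by omega)
      exact ⟨a, x', y', by rwa [triple_swap12, triple_swap23, triple_swap12]⟩
    · -- x top
      obtain ⟨a, x', y', res⟩ := core x y z hx hy hz h h'
        (by omega) (by omega) (by omega) (by omega)
      exact ⟨a, x', y', res⟩


lemma classify {w : ℤ} {b : ℕ} (hb : 1 ≤ b) (hw : w ∈ lacSet lam)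
    (hle : |w| ≤ (lam b : ℤ)) :
    w = (lam b : ℤ) ∨ w = -(lam b : ℤ) ∨ |w| ≤ (lam (b-1) : ℤ) := by
  by_cases he : w = (lam b : ℤ)
  · exact Or.inl he
  by_cases he' : w = -(lam b : ℤ)
  · exact Or.inr (Or.inl he')
  · exact Or.inr (Or.inr (small h0 h1 hlac hb hw hle he he'))

lemma posPair {b : ℕ} {y u v : ℤ} (hb : 1 ≤ b) (hy : y ∈ lacSet lam)
    (hu : u ∈ lacSet lam) (hv : v ∈ lacSet lam)
    (hyx : |y| ≤ (lam b : ℤ)) (hvu : |v| ≤ |u|) (hux : |u| ≤ (lam b : ℤ))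
    (hxy : (lam b : ℤ) + y ≠ 0) (huv : u + v ≠ 0)
    (heq : (lam b : ℤ) + y = u + v) :
    ({((lam b : ℤ)), y} : Multiset ℤ) = {u, v} := by
  have hgap : 3 * (lam (b-1) : ℤ) < (lam b : ℤ) := by exact_mod_cast lam_gap h0 h1 hlac hb
  have hbpos : (0:ℤ) < (lam b : ℤ) := by exact_mod_cast lam_pos h0 h1 hlac b hb
  have hL1 : (0:ℤ) ≤ (lam (b-1) : ℤ) := Int.natCast_nonneg _
  rcases classify h0 h1 hlac hb hy hyx with hy1 | hy1 | hy1
  · rcases classify h0 h1 hlac hb hu hux with hu1 | hu1 | hu1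
    · have hv1 : v = (lam b : ℤ) := by omega
      rw [hy1, hu1, hv1]
    · exfalso
      rw [hu1] at hvu
      rw [abs_neg, abs_of_nonneg hbpos.le] at hvu
      have := abs_le.mp hvu
      omega
    · exfalso
      have h2 : |v| ≤ (lam (b-1) : ℤ) := le_trans hvu hu1
      have := abs_le.mp hu1
      have := abs_le.mp h2
      omega
  · exact absurd (by omega) hxy
  · have hyb := abs_le.mp hy1
    rcases classify h0 h1 hlac hb hu hux with hu1 | hu1 | hu1
    · have hv1 : v = y := by omega
      rw [hu1, hv1]
    · exfalso
      rw [hu1] at hvu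
      rw [abs_neg, abs_of_nonneg hbpos.le] at hvu
      have := abs_le.mp hvu
      omega
    · exfalso
      have h2 : |v| ≤ (lam (b-1) : ℤ) := le_trans hvu hu1
      have := abs_le.mp hu1
      have := abs_le.mp h2
      omega

lemma signedPair {x y u v : ℤ} (hx : x ∈ lacSet lam) (hy : y ∈ lacSet lam)
    (hu : u ∈ lacSet lam) (hv : v ∈ lacSet lam)
    (hxy : x + y ≠ 0) (huv : u + v ≠ 0)
    (hyx : |y| ≤ |x|) (hvu : |v| ≤ |u|) (hux : |u| ≤ |x|)
    (heq : x + y = u + v) :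
    ({x, y} : Multiset ℤ) = {u, v} := by
  obtain ⟨b, hb⟩ := hx
  have hb1 : 1 ≤ b := by
    by_contra hbb
    have hb0 : b = 0 := by omega
    rw [hb0] at hb
    rw [h0] at hb
    have hx0 : x = 0 := by push_cast at hb; omega
    rw [hx0] at hyx
    rw [abs_zero] at hyx
    have h1' := abs_le.mp hyx
    rw [hx0] at hxy
    omega
  rcases hb with hb | hb
  · subst hb
    rw [abs_of_nonneg (Int.natCast_nonneg _)] at hyx hux
    exact posPair h0 h1 hlac hb1 hy hu hv hyx hvu hux hxy huv heq
  · -- x = -(lam b); negate everything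
    have hxx : -x = (lam b : ℤ) := by omega
    have key : ({-x, -y} : Multiset ℤ) = {-u, -v} := by
      have h1' : |(-y)| ≤ (lam b : ℤ) := by
        rw [abs_neg]
        calc |y| ≤ |x| := hyx
          _ = (lam b : ℤ) := by rw [hb]; simp
      have h2' : |(-v)| ≤ |(-u)| := by rwa [abs_neg, abs_neg]
      have h3' : |(-u)| ≤ (lam b : ℤ) := by
        rw [abs_neg]
        calc |u| ≤ |x| := hux
          _ = (lam b : ℤ) := by rw [hb]; simp
      rw [hxx]
      exact posPair h0 h1 hlac hb1 (neg_mem hy) (neg_mem hu) (neg_mem hv)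
        h1' h2' h3' (by omega) (by omega) (by omega)
    have := congrArg (Multiset.map (fun z : ℤ => -z)) key
    simpa using this

lemma pairEq {x y u v : ℤ} (hx : x ∈ lacSet lam) (hy : y ∈ lacSet lam)
    (hu : u ∈ lacSet lam) (hv : v ∈ lacSet lam)
    (hxy : x + y ≠ 0) (huv : u + v ≠ 0) (heq : x + y = u + v) :
    ({x, y} : Multiset ℤ) = {u, v} := by
  rcases le_total |y| |x| with h | h <;> rcases le_total |v| |u| with h' | h'
  · rcases le_total |u| |x| with h'' | h''
    · exact signedPair h0 h1 hlac hx hy hu hv hxy huv h h' h'' heq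
    · exact (signedPair h0 h1 hlac hu hv hx hy huv hxy h' h h'' heq.symm).symm
  · rcases le_total |v| |x| with h'' | h''
    · rw [Multiset.pair_comm u v]
      exact signedPair h0 h1 hlac hx hy hv hu hxy (by omega) h h' h'' (by omega)
    · rw [Multiset.pair_comm u v]
      exact (signedPair h0 h1 hlac hv hu hx hy (by omega) hxy h' h h'' (by omega)).symm
  · rcases le_total |u| |y| with h'' | h''
    · rw [Multiset.pair_comm x y]
      exact signedPair h0 h1 hlac hy hx hu hv (by omega) huv h h' h'' (by omega)
    · rw [Multiset.pair_comm x y]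
      exact (signedPair h0 h1 hlac hu hv hy hx huv (by omega) h' h h'' (by omega)).symm
  · rcases le_total |v| |y| with h'' | h''
    · rw [Multiset.pair_comm x y, Multiset.pair_comm u v]
      exact signedPair h0 h1 hlac hy hx hv hu (by omega) (by omega) h h' h'' (by omega)
    · rw [Multiset.pair_comm x y, Multiset.pair_comm u v]
      exact (signedPair h0 h1 hlac hv hu hy hx (by omega) (by omega) h' h h'' (by omega)).symm


lemma peel {n : ℕ} (hn : 1 ≤ n) {l : Multiset ℤ}
    (hl : ∀ z ∈ l, z ∈ lacSet lam ∧ |z| ≤ (lam n : ℤ))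
    (hsum : (Multiset.card l : ℤ) * (lam (n-1) : ℤ) < l.sum) :
    ∃ l', l = ((lam n : ℤ)) ::ₘ l' := by
  rcases em (((lam n : ℤ)) ∈ l) with hmem | hmem
  · exact Multiset.exists_cons_of_mem hmem
  · exfalso
    have hb : ∀ z ∈ l, z ≤ (lam (n-1) : ℤ) := by
      intro z hz
      obtain ⟨hzA, hzle⟩ := hl z hz
      rcases le_or_gt z 0 with hz0 | hz0
      · exact le_trans hz0 (Int.natCast_nonneg _)
      · obtain ⟨j, rfl⟩ := mem_lac_pos hzA hz0.le
        have hne : lam j ≠ lam n := by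
          intro hc
          apply hmem
          rw [show ((lam j : ℕ) : ℤ) = ((lam n : ℕ) : ℤ) from by exact_mod_cast hc] at hz
          exact hz
        have hja : lam j ≤ lam n := by
          have : ((lam j : ℕ) : ℤ) ≤ (lam n : ℤ) := by
            rwa [abs_of_nonneg (Int.natCast_nonneg _)] at hzle
          exact_mod_cast this
        have hmono := lam_mono h0 h1 hlac
        have : j < n := hmono.lt_iff_lt.mp (by omega)
        have : lam j ≤ lam (n-1) := hmono.monotone (by omega)
        exact_mod_cast this
    have := Multiset.sum_le_card_nsmul l _ hb
    rw [nsmul_eq_mul] at this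
    omega

lemma Klemma {n : ℕ} (hn : 1 ≤ n) {z1 z2 z3 z4 z5 : ℤ}
    (hz1 : z1 ∈ lacSet lam ∧ |z1| ≤ (lam n : ℤ))
    (hz2 : z2 ∈ lacSet lam ∧ |z2| ≤ (lam n : ℤ))
    (hz3 : z3 ∈ lacSet lam ∧ |z3| ≤ (lam n : ℤ))
    (hz4 : z4 ∈ lacSet lam ∧ |z4| ≤ (lam n : ℤ))
    (hz5 : z5 ∈ lacSet lam ∧ |z5| ≤ (lam n : ℤ))
    (hsum : z1 + z2 + z3 + z4 + z5 = (lam (n+1) : ℤ)) :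
    ∃ m k : ℕ,
      (lam m ≤ lam k ∧ lam k ≤ lam n ∧ 0 < lam k ∧
        lam (n + 1) = 3 * lam n + lam m + lam k) ∨
      (lam m < lam k ∧ lam k ≤ lam n ∧
        lam (n + 1) + lam m = 3 * lam n + lam k) := by
  have hgap : 3 * (lam (n-1) : ℤ) < (lam n : ℤ) := by exact_mod_cast lam_gap h0 h1 hlac hn
  have hgap2 : 3 * (lam n : ℤ) < (lam (n+1) : ℤ) := by exact_mod_cast hlac n hn
  have hL1 : (0:ℤ) ≤ (lam (n-1) : ℤ) := Int.natCast_nonneg _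
  have hLn : (0:ℤ) ≤ (lam n : ℤ) := Int.natCast_nonneg _
  set l : Multiset ℤ := {z1, z2, z3, z4, z5} with hldef
  have hlmem : ∀ z ∈ l, z ∈ lacSet lam ∧ |z| ≤ (lam n : ℤ) := by
    intro z hz
    simp only [hldef, Multiset.insert_eq_cons, Multiset.mem_cons, Multiset.mem_singleton] at hz
    rcases hz with rfl | rfl | rfl | rfl | rfl <;> assumption
  have hlcard : Multiset.card l = 5 := by
    simp [hldef, Multiset.insert_eq_cons]
  have hlsum : l.sum = (lam (n+1) : ℤ) := by
    simp only [hldef, Multiset.insert_eq_cons, Multiset.sum_cons, Multiset.sum_singleton]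
    linarith [hsum]
  obtain ⟨l1, hl1⟩ := peel h0 h1 hlac hn hlmem (by rw [hlcard, hlsum]; push_cast; omega)
  have hl1mem : ∀ z ∈ l1, z ∈ lacSet lam ∧ |z| ≤ (lam n : ℤ) := by
    intro z hz
    exact hlmem z (by rw [hl1]; exact Multiset.mem_cons_of_mem hz)
  have hl1card : Multiset.card l1 = 4 := by
    have := congrArg Multiset.card hl1
    rw [hlcard, Multiset.card_cons] at this
    omega
  have hl1sum : l1.sum = (lam (n+1) : ℤ) - (lam n : ℤ) := by
    have := congrArg Multiset.sum hl1
    rw [hlsum, Multiset.sum_cons] at this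
    omega
  obtain ⟨l2, hl2⟩ := peel h0 h1 hlac hn hl1mem (by rw [hl1card, hl1sum]; push_cast; omega)
  have hl2mem : ∀ z ∈ l2, z ∈ lacSet lam ∧ |z| ≤ (lam n : ℤ) := by
    intro z hz
    exact hl1mem z (by rw [hl2]; exact Multiset.mem_cons_of_mem hz)
  have hl2card : Multiset.card l2 = 3 := by
    have := congrArg Multiset.card hl2
    rw [hl1card, Multiset.card_cons] at this
    omega
  have hl2sum : l2.sum = (lam (n+1) : ℤ) - 2 * (lam n : ℤ) := by
    have := congrArg Multiset.sum hl2
    rw [hl1sum, Multiset.sum_cons] at this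
    omega
  obtain ⟨l3, hl3⟩ := peel h0 h1 hlac hn hl2mem (by rw [hl2card, hl2sum]; push_cast; omega)
  have hl3mem : ∀ z ∈ l3, z ∈ lacSet lam ∧ |z| ≤ (lam n : ℤ) := by
    intro z hz
    exact hl2mem z (by rw [hl3]; exact Multiset.mem_cons_of_mem hz)
  have hl3card : Multiset.card l3 = 2 := by
    have := congrArg Multiset.card hl3
    rw [hl2card, Multiset.card_cons] at this
    omega
  have hl3sum : l3.sum = (lam (n+1) : ℤ) - 3 * (lam n : ℤ) := by
    have := congrArg Multiset.sum hl3
    rw [hl2sum, Multiset.sum_cons] at this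
    omega
  obtain ⟨w1, w2, rfl⟩ := Multiset.card_eq_two.mp hl3card
  have hw1 := hl3mem w1 (by simp)
  have hw2 := hl3mem w2 (by simp)
  have hwsum : w1 + w2 = (lam (n+1) : ℤ) - 3 * (lam n : ℤ) := by
    have : ({w1, w2} : Multiset ℤ).sum = w1 + w2 := by
      simp [Multiset.insert_eq_cons, Multiset.sum_cons]
    omega
  have hwpos : 0 < w1 + w2 := by omega
  have hb1 := abs_le.mp hw1.2
  have hb2 := abs_le.mp hw2.2
  rcases le_or_gt 0 w1 with hs1 | hs1 <;> rcases le_or_gt 0 w2 with hs2 | hs2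
  · obtain ⟨m1, rfl⟩ := mem_lac_pos hw1.1 hs1
    obtain ⟨m2, rfl⟩ := mem_lac_pos hw2.1 hs2
    have e : lam (n+1) = 3 * lam n + lam m1 + lam m2 := by exact_mod_cast (by omega :
      ((lam (n+1) : ℕ) : ℤ) = 3 * (lam n : ℤ) + (lam m1 : ℤ) + (lam m2 : ℤ))
    have hm1n : lam m1 ≤ lam n := by exact_mod_cast hb1.2
    have hm2n : lam m2 ≤ lam n := by exact_mod_cast hb2.2
    rcases le_total (lam m1) (lam m2) with ho | ho
    · exact ⟨m1, m2, Or.inl ⟨ho, hm2n, by omega, by omega⟩⟩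
    · exact ⟨m2, m1, Or.inl ⟨ho, hm1n, by omega, by omega⟩⟩
  · obtain ⟨m1, rfl⟩ := mem_lac_pos hw1.1 hs1
    obtain ⟨m2, hm2, hm2pos⟩ := mem_lac_neg hw2.1 hs2
    have e : lam (n+1) + lam m2 = 3 * lam n + lam m1 := by exact_mod_cast (by omega :
      ((lam (n+1) : ℕ) : ℤ) + (lam m2 : ℤ) = 3 * (lam n : ℤ) + (lam m1 : ℤ))
    have hm1n : lam m1 ≤ lam n := by exact_mod_cast hb1.2
    have hlt : lam m2 < lam m1 := by
      have : (lam m2 : ℤ) < (lam m1 : ℤ) := by omega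
      exact_mod_cast this
    exact ⟨m2, m1, Or.inr ⟨hlt, hm1n, e⟩⟩
  · obtain ⟨m2, rfl⟩ := mem_lac_pos hw2.1 hs2
    obtain ⟨m1, hm1, hm1pos⟩ := mem_lac_neg hw1.1 hs1
    have e : lam (n+1) + lam m1 = 3 * lam n + lam m2 := by exact_mod_cast (by omega :
      ((lam (n+1) : ℕ) : ℤ) + (lam m1 : ℤ) = 3 * (lam n : ℤ) + (lam m2 : ℤ))
    have hm2n : lam m2 ≤ lam n := by exact_mod_cast hb2.2
    have hlt : lam m1 < lam m2 := by
      have : (lam m1 : ℤ) < (lam m2 : ℤ) := by omega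
      exact_mod_cast this
    exact ⟨m1, m2, Or.inr ⟨hlt, hm2n, e⟩⟩
  · omega


lemma forward_core {D : ℤ} (hD : 0 < D) {a d : ℕ} {x y u v : ℤ}
    (ha1 : 1 ≤ a) (hd1 : 1 ≤ d) (hda : d ≤ a)
    (hxA : x ∈ lacSet lam) (hyA : y ∈ lacSet lam)
    (huA : u ∈ lacSet lam) (hvA : v ∈ lacSet lam)
    (hxle : |x| ≤ (lam a : ℤ)) (hyle : |y| ≤ (lam a : ℤ))
    (hule : |u| ≤ (lam d : ℤ)) (hvle : |v| ≤ (lam d : ℤ))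
    (hsumS : (lam a : ℤ) + x + y = D) (hsumT : (lam d : ℤ) + u + v = D)
    (hax : (lam a : ℤ) + x ≠ 0) (hay : (lam a : ℤ) + y ≠ 0) (hxy : x + y ≠ 0)
    (hdu : (lam d : ℤ) + u ≠ 0) (hdv : (lam d : ℤ) + v ≠ 0) (huv : u + v ≠ 0)
    (hne : ({((lam a : ℤ)), x, y} : Multiset ℤ) ≠ {((lam d : ℤ)), u, v}) :
    ∃ n m k : ℕ, 1 ≤ n ∧
      ((lam m ≤ lam k ∧ lam k ≤ lam n ∧ 0 < lam k ∧
          lam (n + 1) = 3 * lam n + lam m + lam k) ∨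
       (lam m < lam k ∧ lam k ≤ lam n ∧
          lam (n + 1) + lam m = 3 * lam n + lam k)) := by
  rcases Nat.lt_or_ge d a with hlt | hge
  swap
  · -- d = a : contradiction with hne
    exfalso
    have had : a = d := by omega
    subst had
    apply hne
    have hxyuv : x + y = u + v := by omega
    have := pairEq h0 h1 hlac hxA hyA huA hvA hxy huv hxyuv
    simp only [Multiset.insert_eq_cons]
    exact congrArg ((lam a : ℤ) ::ₘ ·) this
  · -- d < a
    have hmono := lam_mono h0 h1 hlac
    have hgapa : 3 * (lam (a-1) : ℤ) < (lam a : ℤ) := by exact_mod_cast lam_gap h0 h1 hlac ha1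
    have hdle : (lam d : ℤ) ≤ (lam (a-1) : ℤ) := by
      exact_mod_cast hmono.monotone (by omega : d ≤ a - 1)
    have hub := abs_le.mp hule
    have hvb := abs_le.mp hvle
    have hyb := abs_le.mp hyle
    have hDle : D ≤ 3 * (lam (a-1) : ℤ) := by omega
    -- x is small
    have hxsmall : |x| ≤ (lam (a-1) : ℤ) := by
      rcases classify h0 h1 hlac ha1 hxA hxle with hc | hc | hc
      · exfalso; omega
      · exact absurd (by omega) hax
      · exact hc
    have hysmall : |y| ≤ (lam (a-1) : ℤ) := by
      have hxb := abs_le.mp hxsmall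
      rcases classify h0 h1 hlac ha1 hyA hyle with hc | hc | hc
      · exfalso; omega
      · exact absurd (by omega) hay
      · exact hc
    obtain ⟨n, rfl⟩ : ∃ n, a = n + 1 := ⟨a - 1, by omega⟩
    simp only [Nat.add_sub_cancel] at hxsmall hysmall hdle hgapa
    have hn1 : 1 ≤ n := by omega
    have hdn : (lam d : ℤ) ≤ (lam n : ℤ) := hdle
    have habsd : |(lam d : ℤ)| = (lam d : ℤ) := abs_of_nonneg (Int.natCast_nonneg _)
    obtain ⟨m, k, hmk⟩ := Klemma h0 h1 hlac hn1
      (z1 := (lam d : ℤ)) (z2 := u) (z3 := v) (z4 := -x) (z5 := -y)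
      ⟨lam_mem d, by rw [habsd]; exact hdn⟩
      ⟨huA, le_trans hule hdn⟩
      ⟨hvA, le_trans hvle hdn⟩
      ⟨neg_mem hxA, by rw [abs_neg]; exact hxsmall⟩
      ⟨neg_mem hyA, by rw [abs_neg]; exact hysmall⟩
      (by omega)
    exact ⟨n, m, k, hn1, hmk⟩

lemma zero_aux {t p q : ℤ} (ht : t ∈ lacSet lam) (hp : p ∈ lacSet lam) (hq : q ∈ lacSet lam)
    (hpt : |p| ≤ |t|) (hqt : |q| ≤ |t|) (hsum : t + p + q = 0)
    (htp : t + p ≠ 0) (htq : t + q ≠ 0) (hpq : p + q ≠ 0) : False := by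
  obtain ⟨j, hjt⟩ := ht
  have hjabs : |t| = (lam j : ℤ) := by
    rcases hjt with h | h <;> rw [h] <;> simp
  rw [hjabs] at hpt hqt
  have hpb := abs_le.mp hpt
  have hqb := abs_le.mp hqt
  by_cases hj0 : lam j = 0
  · rw [hj0] at hpb hqb
    push_cast at hpb hqb
    rcases hjt with h | h <;> rw [hj0] at h <;> push_cast at h <;> omega
  · have hj1 : 1 ≤ j := by
      by_contra hh
      have : j = 0 := by omega
      rw [this] at hj0
      omega
    have hgap : 3 * (lam (j-1) : ℤ) < (lam j : ℤ) := by exact_mod_cast lam_gap h0 h1 hlac hj1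
    have hL1 : (0:ℤ) ≤ (lam (j-1) : ℤ) := Int.natCast_nonneg _
    rcases classify h0 h1 hlac hj1 hp hpt with hc | hc | hc
    · rcases hjt with h | h <;> omega
    · rcases hjt with h | h <;> omega
    · have hpb' := abs_le.mp hc
      rcases classify h0 h1 hlac hj1 hq hqt with hc' | hc' | hc'
      · rcases hjt with h | h <;> omega
      · rcases hjt with h | h <;> omega
      · have hqb' := abs_le.mp hc'
        rcases hjt with h | h <;> omega

lemma zero_rep {s : Multiset ℤ} (hs : IsRep (lacSet lam) 0 s)
    (hnt : ¬ TrivialTriple s) : False := by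
  obtain ⟨hcard, hmem, hsum⟩ := hs
  obtain ⟨x, y, z, rfl⟩ := Multiset.card_eq_three.mp hcard
  rw [triple_sum] at hsum
  have hx : x ∈ lacSet lam := hmem x (by simp)
  have hy : y ∈ lacSet lam := hmem y (by simp)
  have hz : z ∈ lacSet lam := hmem z (by simp)
  rw [trivialTriple_iff] at hnt
  push_neg at hnt
  obtain ⟨hxy, hxz, hyz⟩ := hnt
  rcases le_total |x| |y| with h | h
  · rcases le_total |y| |z| with h' | h'
    · exact zero_aux h0 h1 hlac hz hx hy (le_trans h h') h' (by omega) (by omega) (by omega) (by omega)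
    · exact zero_aux h0 h1 hlac hy hx hz h h' (by omega) (by omega) (by omega) (by omega)
  · rcases le_total |x| |z| with h' | h'
    · exact zero_aux h0 h1 hlac hz hy hx (le_trans h h') h' (by omega) (by omega) (by omega) (by omega)
    · exact zero_aux h0 h1 hlac hx hy hz h h' (by omega) (by omega) (by omega) (by omega)

lemma forward_pos {D : ℤ} (hD : 0 < D) {s t : Multiset ℤ}
    (hs : IsRep (lacSet lam) D s) (ht : IsRep (lacSet lam) D t)
    (hnts : ¬ TrivialTriple s) (hntt : ¬ TrivialTriple t) (hne : s ≠ t) :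
    ∃ n m k : ℕ, 1 ≤ n ∧
      ((lam m ≤ lam k ∧ lam k ≤ lam n ∧ 0 < lam k ∧
          lam (n + 1) = 3 * lam n + lam m + lam k) ∨
       (lam m < lam k ∧ lam k ≤ lam n ∧
          lam (n + 1) + lam m = 3 * lam n + lam k)) := by
  obtain ⟨a, x, y, ha1, hseq, hxA, hyA, hxle, hyle, hsumS, hax, hay, hxy⟩ :=
    R1 h0 h1 hlac hD hs hnts
  obtain ⟨d, u, v, hd1, hteq, huA, hvA, hule, hvle, hsumT, hdu, hdv, huv⟩ :=
    R1 h0 h1 hlac hD ht hntt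
  subst hseq hteq
  rcases le_total d a with hda | hda
  · exact forward_core h0 h1 hlac hD ha1 hd1 hda hxA hyA huA hvA hxle hyle hule hvle
      hsumS hsumT hax hay hxy hdu hdv huv hne
  · exact forward_core h0 h1 hlac hD hd1 ha1 hda huA hvA hxA hyA hule hvle hxle hyle
      hsumT hsumS hdu hdv huv hax hay hxy (Ne.symm hne)


omit h0 h1 hlac in
lemma rep_neg {D : ℤ} {s : Multiset ℤ} (h : IsRep (lacSet lam) D s) :
    IsRep (lacSet lam) (-D) (s.map (fun z => -z)) := by
  obtain ⟨hcard, hmem, hsum⟩ := h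
  refine ⟨by rw [Multiset.card_map]; exact hcard, ?_, ?_⟩
  · intro x hx
    obtain ⟨z, hz, rfl⟩ := Multiset.mem_map.mp hx
    exact neg_mem (hmem z hz)
  · rw [Multiset.sum_map_neg', hsum]

omit h0 h1 hlac in
lemma trivial_neg {s : Multiset ℤ} (h : TrivialTriple s) :
    TrivialTriple (s.map (fun z => -z)) := by
  obtain ⟨m, hm⟩ := h
  refine ⟨-m, ?_⟩
  have := Multiset.map_le_map (f := fun z : ℤ => -z) hm
  have hpair : (({m, -m} : Multiset ℤ).map (fun z : ℤ => -z)) = {-m, -(-m)} := by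
    simp [Multiset.insert_eq_cons]
  rwa [hpair] at this

omit h0 h1 hlac in
lemma map_neg_neg (s : Multiset ℤ) : (s.map (fun z : ℤ => -z)).map (fun z : ℤ => -z) = s := by
  rw [Multiset.map_map]
  simp

omit h0 h1 hlac in
lemma exception_neg {D : ℤ} (h : IsP3Exception (lacSet lam) D) :
    IsP3Exception (lacSet lam) (-D) := by
  obtain ⟨s, t, hs, ht, hnts, hntt, hne⟩ := h
  refine ⟨s.map (fun z => -z), t.map (fun z => -z), rep_neg hs, rep_neg ht, ?_, ?_, ?_⟩
  · intro hc
    apply hnts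
    have := trivial_neg hc
    rwa [map_neg_neg] at this
  · intro hc
    apply hntt
    have := trivial_neg hc
    rwa [map_neg_neg] at this
  · intro hc
    apply hne
    have := congrArg (Multiset.map (fun z : ℤ => -z)) hc
    rwa [map_neg_neg, map_neg_neg] at this

lemma backward {n m k : ℕ} (hn : 1 ≤ n)
    (hcase : (lam m ≤ lam k ∧ lam k ≤ lam n ∧ 0 < lam k ∧
        lam (n + 1) = 3 * lam n + lam m + lam k) ∨
      (lam m < lam k ∧ lam k ≤ lam n ∧
        lam (n + 1) + lam m = 3 * lam n + lam k)) :
    ∃ D : ℤ, IsP3Exception (lacSet lam) D := by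
  have hnpos : 0 < lam n := lam_pos h0 h1 hlac n hn
  have hstep : 3 * lam n < lam (n+1) := hlac n hn
  refine ⟨3 * (lam n : ℤ), ?_⟩
  have hsrep : IsRep (lacSet lam) (3 * (lam n : ℤ))
      ({((lam n : ℤ)), ((lam n : ℤ)), ((lam n : ℤ))} : Multiset ℤ) := by
    refine ⟨by simp [Multiset.insert_eq_cons], ?_, by rw [triple_sum]; ring⟩
    intro x hx
    simp only [Multiset.insert_eq_cons, Multiset.mem_cons, Multiset.mem_singleton] at hx
    rcases hx with rfl | rfl | rfl <;> exact lam_mem n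
  have hsnt : ¬ TrivialTriple ({((lam n : ℤ)), ((lam n : ℤ)), ((lam n : ℤ))} : Multiset ℤ) := by
    rw [trivialTriple_iff]
    push_neg
    have : (0:ℤ) < (lam n : ℤ) := by exact_mod_cast hnpos
    refine ⟨by omega, by omega, by omega⟩
  rcases hcase with ⟨hmk, hkn, hkpos, he⟩ | ⟨hmk, hkn, he⟩
  · refine ⟨_, {((lam (n+1) : ℤ)), -((lam m : ℤ)), -((lam k : ℤ))}, hsrep, ?_, hsnt, ?_, ?_⟩
    · refine ⟨by simp [Multiset.insert_eq_cons], ?_, ?_⟩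
      · intro x hx
        simp only [Multiset.insert_eq_cons, Multiset.mem_cons, Multiset.mem_singleton] at hx
        rcases hx with rfl | rfl | rfl
        · exact lam_mem _
        · exact neg_lam_mem _
        · exact neg_lam_mem _
      · rw [triple_sum]
        have : ((lam (n+1) : ℕ) : ℤ) = 3 * (lam n : ℤ) + (lam m : ℤ) + (lam k : ℤ) := by
          exact_mod_cast he
        omega
    · rw [trivialTriple_iff]
      push_neg
      have e1 : ((lam (n+1) : ℕ) : ℤ) = 3 * (lam n : ℤ) + (lam m : ℤ) + (lam k : ℤ) := by
        exact_mod_cast he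
      have e2 : (0:ℤ) < (lam k : ℤ) := by exact_mod_cast hkpos
      have e3 : (0:ℤ) ≤ (lam m : ℤ) := Int.natCast_nonneg _
      have e4 : (0:ℤ) < (lam n : ℤ) := by exact_mod_cast hnpos
      refine ⟨by omega, by omega, by omega⟩
    · intro hc
      have : ((lam (n+1) : ℕ) : ℤ) ∈
          ({((lam n : ℤ)), ((lam n : ℤ)), ((lam n : ℤ))} : Multiset ℤ) := by
        rw [hc]; simp
      simp only [Multiset.insert_eq_cons, Multiset.mem_cons, Multiset.mem_singleton] at this
      have : ((lam (n+1) : ℕ) : ℤ) = (lam n : ℤ) := by tauto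
      have : lam (n+1) = lam n := by exact_mod_cast this
      omega
  · refine ⟨_, {((lam (n+1) : ℤ)), ((lam m : ℤ)), -((lam k : ℤ))}, hsrep, ?_, hsnt, ?_, ?_⟩
    · refine ⟨by simp [Multiset.insert_eq_cons], ?_, ?_⟩
      · intro x hx
        simp only [Multiset.insert_eq_cons, Multiset.mem_cons, Multiset.mem_singleton] at hx
        rcases hx with rfl | rfl | rfl
        · exact lam_mem _
        · exact lam_mem _
        · exact neg_lam_mem _
      · rw [triple_sum]
        have : ((lam (n+1) : ℕ) : ℤ) + (lam m : ℤ) = 3 * (lam n : ℤ) + (lam k : ℤ) := by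
          exact_mod_cast he
        omega
    · rw [trivialTriple_iff]
      push_neg
      have e1 : ((lam (n+1) : ℕ) : ℤ) + (lam m : ℤ) = 3 * (lam n : ℤ) + (lam k : ℤ) := by
        exact_mod_cast he
      have e2 : ((lam m : ℕ) : ℤ) < (lam k : ℤ) := by exact_mod_cast hmk
      have e3 : (0:ℤ) ≤ (lam m : ℤ) := Int.natCast_nonneg _
      have e4 : (0:ℤ) < (lam n : ℤ) := by exact_mod_cast hnpos
      have e5 : ((lam k : ℕ) : ℤ) ≤ (lam n : ℤ) := by exact_mod_cast hkn
      refine ⟨by omega, by omega, by omega⟩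
    · intro hc
      have : ((lam (n+1) : ℕ) : ℤ) ∈
          ({((lam n : ℤ)), ((lam n : ℤ)), ((lam n : ℤ))} : Multiset ℤ) := by
        rw [hc]; simp
      simp only [Multiset.insert_eq_cons, Multiset.mem_cons, Multiset.mem_singleton] at this
      have : ((lam (n+1) : ℕ) : ℤ) = (lam n : ℤ) := by tauto
      have : lam (n+1) = lam n := by exact_mod_cast this
      omega

end B


end Aux

theorem stmt_4 (lam : ℕ → ℕ) (h0 : lam 0 = 0) (h1 : 0 < lam 1)
    (hlac : ∀ n, 1 ≤ n → 3 * lam n < lam (n + 1)) :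
    (∃ D : ℤ, IsP3Exception (lacSet lam) D) ↔
      (∃ n m k : ℕ, 1 ≤ n ∧
        ((lam m ≤ lam k ∧ lam k ≤ lam n ∧ 0 < lam k ∧
            lam (n + 1) = 3 * lam n + lam m + lam k) ∨
         (lam m < lam k ∧ lam k ≤ lam n ∧
            lam (n + 1) + lam m = 3 * lam n + lam k))) := by
  constructor
  · rintro ⟨D, hD⟩
    rcases lt_trichotomy D 0 with h | h | h
    · have hneg := exception_neg hD
      obtain ⟨s, t, hs, ht, hnts, hntt, hne⟩ := hneg
      exact forward_pos h0 h1 hlac (by omega) hs ht hnts hntt hne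
    · subst h
      obtain ⟨s, t, hs, ht, hnts, hntt, hne⟩ := hD
      exact absurd (zero_rep h0 h1 hlac hs hnts) (by simp)
    · obtain ⟨s, t, hs, ht, hnts, hntt, hne⟩ := hD
      exact forward_pos h0 h1 hlac h hs ht hnts hntt hne
  · rintro ⟨n, m, k, hn, hcase⟩
    exact backward h0 h1 hlac hn hcase
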